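/- Let L, T > 0, constants 0 < v_m ≤ V_M, 0 < S_m ≤ S_M, R > 0, q₀ ≥ 0, and let 0 < δ ≤ t₀ ≤ T satisfy δ·q₀ < S_m/12 and t₀ ≤ S_m L^{3/2}/(4 R V_M). Let Q : [0,t₀] → ℝ be continuous with −q₀·max(1 − t/δ, 0) ≤ Q(t) ≤ q₀·max(1 − t/δ, 0) + V_M R/L^{3/2} for all t. Let v⁰ : [0,t₀] × [0,L] → ℝ be continuous with v⁰(t,x) > 0 everywhere, and let u ∈ C¹([0,t₀] × [0,L]) satisfy ∂ₜu + v⁰ ∂ₓu + Q(t) = 0 on (0,t₀) × (0,L), with u(0,x) = S₁(x) for x ∈ [0,L] and u(t,0) = S₀(t) for t ∈ [0,t₀], where S_m ≤ S₀(t) ≤ S_M and S_m ≤ S₁(x) ≤ S_M. Then S_m/4 ≤ u(t,x) ≤ S_M + 2S_m/3 for all (t,x) ∈ [0,t₀] × [0,L]. -/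

import Mathlib

/-!
Adding the primitive `Φ(t) = ∫₀ᵗ Q` turns `u` into `w = u + Φ`, which solves the homogeneous
transport equation `∂ₜw + v⁰ ∂ₓw = 0` with `v⁰ > 0`. Such a `w` obeys a maximum principle: its
extrema on the rectangle are attained on the inflow boundary `{t = 0} ∪ {x = 0}`, where it lies
between `S_m + Φ` and `S_M + Φ`. The forcing bounds give `-δ q₀ ≤ Φ ≤ δ q₀ + t₀ V_M R / L^{3/2}`,
and the smallness conditions make both error terms small compared with `S_m`.
-/

open Set Topology Filter intervalIntegral

theorem HasDerivWithinAt.nonneg_of_isMaxOn_Icc {f : ℝ → ℝ} {f' a b c : ℝ}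
    (hf : HasDerivWithinAt f f' (Icc a b) c) (hmax : IsMaxOn f (Icc a b) c)
    (hc : c ∈ Icc a b) (hac : a < c) : 0 ≤ f' := by
  have hseg : segment ℝ c a ⊆ Icc a b :=
    (convex_Icc a b).segment_subset hc (left_mem_Icc.2 (hac.le.trans hc.2))
  have h := hmax.localize.hasFDerivWithinAt_nonpos hf.hasFDerivWithinAt
    (sub_mem_posTangentConeAt_of_segment_subset hseg)
  rw [ContinuousLinearMap.toSpanSingleton_apply, smul_eq_mul] at h
  nlinarith

theorem Set.EqOn.of_Ioo_prod_Ioo {Y : Type*} [TopologicalSpace Y] [T2Space Y]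
    {f g : ℝ × ℝ → Y} {a b c d : ℝ} (hab : a < b) (hcd : c < d)
    (hf : ContinuousOn f (Icc a b ×ˢ Icc c d)) (hg : ContinuousOn g (Icc a b ×ˢ Icc c d))
    (h : EqOn f g (Ioo a b ×ˢ Ioo c d)) : EqOn f g (Icc a b ×ˢ Icc c d) :=
  h.of_subset_closure hf hg (prod_mono Ioo_subset_Icc_self Ioo_subset_Icc_self)
    (by rw [closure_prod_eq, closure_Ioo hab.ne, closure_Ioo hcd.ne])

section Transport

variable {a b c d M : ℝ} {w wt wx v : ℝ → ℝ → ℝ}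
  (hw : ContinuousOn (fun p : ℝ × ℝ => w p.1 p.2) (Icc a b ×ˢ Icc c d))
  (hwt : ∀ t ∈ Ioc a b, ∀ x ∈ Ioc c d,
    HasDerivWithinAt (fun s => w s x) (wt t x) (Icc a b) t)
  (hwx : ∀ t ∈ Ioc a b, ∀ x ∈ Ioc c d, HasDerivWithinAt (w t) (wx t x) (Icc c d) x)
  (hv : ∀ t ∈ Ioc a b, ∀ x ∈ Ioc c d, 0 ≤ v t x)
include hw hwt hwx hv

theorem le_add_mul_of_transport_subsolution
    (hsub : ∀ t ∈ Ioc a b, ∀ x ∈ Ioc c d, wt t x + v t x * wx t x ≤ 0)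
    (hinit : ∀ x ∈ Icc c d, w a x ≤ M) (hbdry : ∀ t ∈ Icc a b, w t c ≤ M)
    {ε : ℝ} (hε : 0 < ε) {t x : ℝ} (ht : t ∈ Icc a b) (hx : x ∈ Icc c d) :
    w t x ≤ M + ε * (t - a) := by
  set G : ℝ × ℝ → ℝ := fun p => w p.1 p.2 - ε * (p.1 - a)
  have hG : ContinuousOn G (Icc a b ×ˢ Icc c d) := hw.sub (by fun_prop)
  obtain ⟨⟨s, y⟩, ⟨hs, hy⟩, hmax⟩ :=
    (isCompact_Icc.prod isCompact_Icc).exists_isMaxOn ⟨(t, x), ht, hx⟩ hG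
  suffices G (s, y) ≤ M from by
    have h := hmax (mk_mem_prod ht hx)
    simp only [mem_ofPred_eq, G] at h this
    linarith
  rcases hs.1.eq_or_lt with rfl | has
  · simpa [G] using hinit y hy
  rcases hy.1.eq_or_lt with rfl | hcy
  · simp only [G]
    linarith [hbdry s hs, mul_nonneg hε.le (sub_nonneg.2 hs.1)]
  -- off the inflow boundary both one-sided slopes of `G` at its maximum are `≥ 0`, so `wt ≥ ε`
  have htime : 0 ≤ wt s y - ε :=
    ((hwt s ⟨has, hs.2⟩ y ⟨hcy, hy.2⟩).sub (((hasDerivWithinAt_id s _).sub_const a).const_mul ε)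
      |>.congr_deriv (by ring)).nonneg_of_isMaxOn_Icc
      (hmax.comp_mapsTo (fun r hr => mk_mem_prod hr hy) rfl) hs has
  have hspace : 0 ≤ wx s y :=
    ((hwx s ⟨has, hs.2⟩ y ⟨hcy, hy.2⟩).sub_const (ε * (s - a))).nonneg_of_isMaxOn_Icc
      (hmax.comp_mapsTo (fun r hr => mk_mem_prod hs hr) rfl) hy hcy
  nlinarith [hv s ⟨has, hs.2⟩ y ⟨hcy, hy.2⟩, hsub s ⟨has, hs.2⟩ y ⟨hcy, hy.2⟩]

theorem le_of_transport_subsolution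
    (hsub : ∀ t ∈ Ioc a b, ∀ x ∈ Ioc c d, wt t x + v t x * wx t x ≤ 0)
    (hinit : ∀ x ∈ Icc c d, w a x ≤ M) (hbdry : ∀ t ∈ Icc a b, w t c ≤ M)
    {t x : ℝ} (ht : t ∈ Icc a b) (hx : x ∈ Icc c d) : w t x ≤ M := by
  have hlim : Tendsto (fun ε => M + ε * (t - a)) (𝓝[>] 0) (𝓝 M) :=
    tendsto_nhdsWithin_of_tendsto_nhds <|
      (continuous_const.add (continuous_id.mul continuous_const)).tendsto' _ _ (by simp)
  exact ge_of_tendsto hlim (eventually_nhdsWithin_of_forall fun ε hε =>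
    le_add_mul_of_transport_subsolution hw hwt hwx hv hsub hinit hbdry hε ht hx)

theorem mem_Icc_of_transport_solution {m : ℝ}
    (hsol : ∀ t ∈ Ioc a b, ∀ x ∈ Ioc c d, wt t x + v t x * wx t x = 0)
    (hinit : ∀ x ∈ Icc c d, w a x ∈ Icc m M) (hbdry : ∀ t ∈ Icc a b, w t c ∈ Icc m M)
    {t x : ℝ} (ht : t ∈ Icc a b) (hx : x ∈ Icc c d) : w t x ∈ Icc m M := by
  refine ⟨neg_le_neg_iff.1 ?_, le_of_transport_subsolution hw hwt hwx hv
    (fun t ht x hx => (hsol t ht x hx).le) (fun x hx => (hinit x hx).2)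
    (fun t ht => (hbdry t ht).2) ht hx⟩
  exact le_of_transport_subsolution (w := fun t x => -w t x) (wt := fun t x => -wt t x)
    (wx := fun t x => -wx t x) hw.neg (fun t ht x hx => (hwt t ht x hx).neg)
    (fun t ht x hx => (hwx t ht x hx).neg) hv
    (fun t ht x hx => by linarith [hsol t ht x hx]) (fun x hx => neg_le_neg (hinit x hx).1)
    (fun t ht => neg_le_neg (hbdry t ht).1) ht hx

end Transport

theorem add_integral_mem_Icc_of_forced_transport {b c d m M : ℝ} {Q : ℝ → ℝ}
    {u ut ux v : ℝ → ℝ → ℝ} (hQ : ContinuousOn Q (Icc 0 b))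
    (hu : ContinuousOn (fun p : ℝ × ℝ => u p.1 p.2) (Icc 0 b ×ˢ Icc c d))
    (hut : ∀ t ∈ Ioc 0 b, ∀ x ∈ Ioc c d,
      HasDerivWithinAt (fun s => u s x) (ut t x) (Icc 0 b) t)
    (hux : ∀ t ∈ Ioc 0 b, ∀ x ∈ Ioc c d, HasDerivWithinAt (u t) (ux t x) (Icc c d) x)
    (hv : ∀ t ∈ Ioc 0 b, ∀ x ∈ Ioc c d, 0 ≤ v t x)
    (hsol : ∀ t ∈ Ioc 0 b, ∀ x ∈ Ioc c d, ut t x + v t x * ux t x + Q t = 0)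
    (hinit : ∀ x ∈ Icc c d, u 0 x ∈ Icc m M)
    (hbdry : ∀ t ∈ Icc 0 b, u t c + ∫ s in 0..t, Q s ∈ Icc m M)
    {t x : ℝ} (ht : t ∈ Icc 0 b) (hx : x ∈ Icc c d) : u t x + ∫ s in 0..t, Q s ∈ Icc m M := by
  have hΦ : ∀ t ∈ Icc 0 b, HasDerivWithinAt (fun t => ∫ s in 0..t, Q s) (Q t) (Icc 0 b) t :=
    fun t ht =>
      have : Fact (t ∈ Icc 0 b) := ⟨ht⟩
      integral_hasDerivWithinAt_right
        ((hQ.mono (Icc_subset_Icc_right ht.2)).intervalIntegrable_of_Icc ht.1)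
        (hQ.stronglyMeasurableAtFilter_nhdsWithin measurableSet_Icc t) (hQ t ht)
  have hΦcont : ContinuousOn (fun t => ∫ s in 0..t, Q s) (Icc 0 b) :=
    fun t ht => (hΦ t ht).continuousWithinAt
  exact mem_Icc_of_transport_solution (w := fun t x => u t x + ∫ s in 0..t, Q s)
    (hu.add (hΦcont.comp continuous_fst.continuousOn fun p hp => hp.1))
    (fun t ht x hx => (hut t ht x hx).add (hΦ t (Ioc_subset_Icc_self ht)))
    (fun t ht x hx => (hux t ht x hx).add_const _) hv
    (fun t ht x hx => by linarith [hsol t ht x hx])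
    (fun x hx => by simpa only [integral_same, add_zero] using hinit x hx) hbdry ht hx

section Forcing

variable {Q : ℝ → ℝ} {q₀ δ t : ℝ}

theorem integral_max_one_sub_div_le (hδ : 0 < δ) (ht : 0 ≤ t) :
    ∫ s in 0..t, max (1 - s / δ) 0 ≤ δ := by
  have hint : ∀ a b : ℝ, IntervalIntegrable (fun s => max (1 - s / δ) 0) MeasureTheory.volume a b :=
    fun a b => (by fun_prop : Continuous fun s : ℝ => max (1 - s / δ) 0).intervalIntegrable a b
  have hle : ∀ r, 0 ≤ r → ∫ s in 0..r, max (1 - s / δ) 0 ≤ r := fun r hr => by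
    simpa using integral_mono_on hr (hint 0 r) intervalIntegrable_const fun s hs =>
      max_le (by linarith [div_nonneg hs.1 hδ.le]) zero_le_one
  rcases le_total t δ with htδ | hδt
  · exact (hle t ht).trans htδ
  have htail : ∫ s in δ..t, max (1 - s / δ) 0 ≤ 0 := by
    simpa using integral_mono_on hδt (hint δ t) intervalIntegrable_const fun s hs =>
      max_le (by linarith [(one_le_div hδ).2 hs.1]) le_rfl
  rw [← integral_add_adjacent_intervals (hint 0 δ) (hint δ t)]
  linarith [hle δ hδ.le]

theorem integral_le_of_le_ramp_add {C : ℝ} (hq₀ : 0 ≤ q₀) (hδ : 0 < δ) (ht : 0 ≤ t)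
    (hQ : ContinuousOn Q (Icc 0 t)) (hub : ∀ s ∈ Icc 0 t, Q s ≤ q₀ * max (1 - s / δ) 0 + C) :
    ∫ s in 0..t, Q s ≤ δ * q₀ + t * C :=
  calc ∫ s in 0..t, Q s ≤ ∫ s in 0..t, (q₀ * max (1 - s / δ) 0 + C) :=
        integral_mono_on ht (hQ.intervalIntegrable_of_Icc ht)
          ((by fun_prop : Continuous fun s : ℝ => q₀ * max (1 - s / δ) 0 + C).intervalIntegrable
            0 t) hub
    _ = q₀ * (∫ s in 0..t, max (1 - s / δ) 0) + t * C := by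
        rw [integral_add ((by fun_prop : Continuous fun s : ℝ => q₀ * max (1 - s / δ) 0)
          |>.intervalIntegrable 0 t) intervalIntegrable_const, integral_const_mul]
        simp
    _ ≤ δ * q₀ + t * C := by nlinarith [integral_max_one_sub_div_le hδ ht]

theorem neg_le_integral_of_neg_ramp_le (hq₀ : 0 ≤ q₀) (hδ : 0 < δ) (ht : 0 ≤ t)
    (hQ : ContinuousOn Q (Icc 0 t)) (hlb : ∀ s ∈ Icc 0 t, -q₀ * max (1 - s / δ) 0 ≤ Q s) :
    -(δ * q₀) ≤ ∫ s in 0..t, Q s :=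
  calc -(δ * q₀) ≤ -q₀ * ∫ s in 0..t, max (1 - s / δ) 0 := by
        nlinarith [integral_max_one_sub_div_le hδ ht]
    _ = ∫ s in 0..t, -q₀ * max (1 - s / δ) 0 := (integral_const_mul _ _).symm
    _ ≤ ∫ s in 0..t, Q s :=
        integral_mono_on ht ((by fun_prop : Continuous fun s : ℝ => -q₀ * max (1 - s / δ) 0)
          |>.intervalIntegrable 0 t) (hQ.intervalIntegrable_of_Icc ht) hlb

end Forcing

theorem statement10_general
    (L v_m V_M S_m S_M R q₀ δ t₀ : ℝ)
    (hL : 0 < L)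
    (hvm : 0 < v_m) (hvmV : v_m ≤ V_M)
    (hSm : 0 < S_m)
    (hR : 0 < R) (hq₀ : 0 ≤ q₀)
    (hδ : 0 < δ)
    (hδq : δ * q₀ < S_m / 12)
    (ht₀ : t₀ ≤ S_m * L ^ ((3:ℝ)/2) / (4 * R * V_M))
    (Q S₀ S₁ : ℝ → ℝ) (v0 u ut ux : ℝ → ℝ → ℝ)
    (hQcont : ContinuousOn Q (Icc 0 t₀))
    (hQlb : ∀ t ∈ Icc (0:ℝ) t₀, -q₀ * max (1 - t / δ) 0 ≤ Q t)
    (hQub : ∀ t ∈ Icc (0:ℝ) t₀,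
        Q t ≤ q₀ * max (1 - t / δ) 0 + V_M * R / L ^ ((3:ℝ)/2))
    (hv0cont : ContinuousOn (fun p : ℝ × ℝ => v0 p.1 p.2) (Icc 0 t₀ ×ˢ Icc 0 L))
    (hv0pos : ∀ t ∈ Icc (0:ℝ) t₀, ∀ x ∈ Icc (0:ℝ) L, 0 < v0 t x)
    -- `u ∈ C¹([0,t₀] × [0,L])`
    (hucont : ContinuousOn (fun p : ℝ × ℝ => u p.1 p.2) (Icc 0 t₀ ×ˢ Icc 0 L))
    (hutcont : ContinuousOn (fun p : ℝ × ℝ => ut p.1 p.2) (Icc 0 t₀ ×ˢ Icc 0 L))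
    (huxcont : ContinuousOn (fun p : ℝ × ℝ => ux p.1 p.2) (Icc 0 t₀ ×ˢ Icc 0 L))
    (hut : ∀ t ∈ Icc (0:ℝ) t₀, ∀ x ∈ Icc (0:ℝ) L,
        HasDerivWithinAt (fun s => u s x) (ut t x) (Icc 0 t₀) t)
    (hux : ∀ t ∈ Icc (0:ℝ) t₀, ∀ x ∈ Icc (0:ℝ) L,
        HasDerivWithinAt (fun y => u t y) (ux t x) (Icc 0 L) x)
    (heq : ∀ t ∈ Ioo (0:ℝ) t₀, ∀ x ∈ Ioo (0:ℝ) L,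
        ut t x + v0 t x * ux t x + Q t = 0)
    (hinit : ∀ x ∈ Icc (0:ℝ) L, u 0 x = S₁ x)
    (hbdry : ∀ t ∈ Icc (0:ℝ) t₀, u t 0 = S₀ t)
    (hS₀ : ∀ t ∈ Icc (0:ℝ) t₀, S_m ≤ S₀ t ∧ S₀ t ≤ S_M)
    (hS₁ : ∀ x ∈ Icc (0:ℝ) L, S_m ≤ S₁ x ∧ S₁ x ≤ S_M) :
    ∀ t ∈ Icc (0:ℝ) t₀, ∀ x ∈ Icc (0:ℝ) L,
      S_m / 4 ≤ u t x ∧ u t x ≤ S_M + 2 * S_m / 3 := by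
  have hC : ∀ t ≤ t₀, t * (V_M * R / L ^ ((3:ℝ)/2)) ≤ S_m / 4 := fun t ht => by
    have hV : 0 < V_M := hvm.trans_le hvmV
    have hL' : 0 < L ^ ((3:ℝ)/2) := Real.rpow_pos_of_pos hL _
    calc t * (V_M * R / L ^ ((3:ℝ)/2))
        ≤ S_m * L ^ ((3:ℝ)/2) / (4 * R * V_M) * (V_M * R / L ^ ((3:ℝ)/2)) := by gcongr; linarith
      _ = S_m / 4 := by field_simp
  have hΦ : ∀ t ∈ Icc 0 t₀, -(δ * q₀) ≤ ∫ s in 0..t, Q s ∧ ∫ s in 0..t, Q s ≤ δ * q₀ + S_m / 4 :=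
    fun t ht =>
      have hQt := hQcont.mono (Icc_subset_Icc_right ht.2)
      ⟨neg_le_integral_of_neg_ramp_le hq₀ hδ ht.1 hQt fun s hs => hQlb s ⟨hs.1, hs.2.trans ht.2⟩,
        (integral_le_of_le_ramp_add hq₀ hδ ht.1 hQt fun s hs =>
          hQub s ⟨hs.1, hs.2.trans ht.2⟩).trans (by linarith [hC t ht.2])⟩
  have hpde : ∀ t ∈ Ioc 0 t₀, ∀ x ∈ Ioc 0 L, ut t x + v0 t x * ux t x + Q t = 0 :=
    fun t ht x hx => by
      have := Set.EqOn.of_Ioo_prod_Ioo (ht.1.trans_le ht.2) (hx.1.trans_le hx.2)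
        ((hutcont.add (hv0cont.mul huxcont)).add
          (hQcont.comp continuous_fst.continuousOn fun p hp => hp.1))
        continuousOn_const (fun p hp => heq p.1 hp.1 p.2 hp.2)
        (mk_mem_prod (Ioc_subset_Icc_self ht) (Ioc_subset_Icc_self hx))
      simpa only [Pi.add_apply, Pi.mul_apply, Function.comp_apply] using this
  have hδq₀ : 0 ≤ δ * q₀ := by positivity
  intro t ht x hx
  have hw := add_integral_mem_Icc_of_forced_transport (m := S_m - δ * q₀)
    (M := S_M + δ * q₀ + S_m / 4) hQcont hucont
    (fun t ht x hx => hut t (Ioc_subset_Icc_self ht) x (Ioc_subset_Icc_self hx))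
    (fun t ht x hx => hux t (Ioc_subset_Icc_self ht) x (Ioc_subset_Icc_self hx))
    (fun t ht x hx => (hv0pos t (Ioc_subset_Icc_self ht) x (Ioc_subset_Icc_self hx)).le) hpde
    (fun x hx => by rw [hinit x hx]; constructor <;> linarith [hS₁ x hx])
    (fun t ht => by rw [hbdry t ht]; constructor <;> linarith [hS₀ t ht, hΦ t ht]) ht hx
  constructor <;> linarith [hw.1, hw.2, hΦ t ht]

/-- Barrier bounds for the linearized regularized Matovich–Pearson
step: the solution `u` of `∂ₜu + v⁰ ∂ₓu + Q(t) = 0` with data `u(0,·) = S₁ ∈ [S_m,S_M]`,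
`u(·,0) = S₀ ∈ [S_m,S_M]`, positive continuous speed `v⁰`, and forcing `Q` satisfying
`−q₀ max(1−t/δ,0) ≤ Q(t) ≤ q₀ max(1−t/δ,0) + V_M R/L^{3/2}`, under the smallness
conditions `δ q₀ < S_m/12` and `t₀ ≤ S_m L^{3/2}/(4 R V_M)`, satisfies
`S_m/4 ≤ u ≤ S_M + 2S_m/3` on `[0,t₀] × [0,L]`. -/
theorem statement10
    (L T v_m V_M S_m S_M R q₀ δ t₀ : ℝ)
    (hL : 0 < L) (hT : 0 < T)
    (hvm : 0 < v_m) (hvmV : v_m ≤ V_M)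
    (hSm : 0 < S_m) (hSmM : S_m ≤ S_M)
    (hR : 0 < R) (hq₀ : 0 ≤ q₀)
    (hδ : 0 < δ) (hδt₀ : δ ≤ t₀) (ht₀T : t₀ ≤ T)
    (hδq : δ * q₀ < S_m / 12)
    (ht₀ : t₀ ≤ S_m * L ^ ((3:ℝ)/2) / (4 * R * V_M))
    (Q S₀ S₁ : ℝ → ℝ) (v0 u ut ux : ℝ → ℝ → ℝ)
    (hQcont : ContinuousOn Q (Icc 0 t₀))
    (hQlb : ∀ t ∈ Icc (0:ℝ) t₀, -q₀ * max (1 - t / δ) 0 ≤ Q t)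
    (hQub : ∀ t ∈ Icc (0:ℝ) t₀,
        Q t ≤ q₀ * max (1 - t / δ) 0 + V_M * R / L ^ ((3:ℝ)/2))
    (hv0cont : ContinuousOn (fun p : ℝ × ℝ => v0 p.1 p.2) (Icc 0 t₀ ×ˢ Icc 0 L))
    (hv0pos : ∀ t ∈ Icc (0:ℝ) t₀, ∀ x ∈ Icc (0:ℝ) L, 0 < v0 t x)
    -- `u ∈ C¹([0,t₀] × [0,L])`
    (hucont : ContinuousOn (fun p : ℝ × ℝ => u p.1 p.2) (Icc 0 t₀ ×ˢ Icc 0 L))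
    (hutcont : ContinuousOn (fun p : ℝ × ℝ => ut p.1 p.2) (Icc 0 t₀ ×ˢ Icc 0 L))
    (huxcont : ContinuousOn (fun p : ℝ × ℝ => ux p.1 p.2) (Icc 0 t₀ ×ˢ Icc 0 L))
    (hut : ∀ t ∈ Icc (0:ℝ) t₀, ∀ x ∈ Icc (0:ℝ) L,
        HasDerivWithinAt (fun s => u s x) (ut t x) (Icc 0 t₀) t)
    (hux : ∀ t ∈ Icc (0:ℝ) t₀, ∀ x ∈ Icc (0:ℝ) L,
        HasDerivWithinAt (fun y => u t y) (ux t x) (Icc 0 L) x)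
    (heq : ∀ t ∈ Ioo (0:ℝ) t₀, ∀ x ∈ Ioo (0:ℝ) L,
        ut t x + v0 t x * ux t x + Q t = 0)
    (hinit : ∀ x ∈ Icc (0:ℝ) L, u 0 x = S₁ x)
    (hbdry : ∀ t ∈ Icc (0:ℝ) t₀, u t 0 = S₀ t)
    (hS₀ : ∀ t ∈ Icc (0:ℝ) t₀, S_m ≤ S₀ t ∧ S₀ t ≤ S_M)
    (hS₁ : ∀ x ∈ Icc (0:ℝ) L, S_m ≤ S₁ x ∧ S₁ x ≤ S_M) :
    ∀ t ∈ Icc (0:ℝ) t₀, ∀ x ∈ Icc (0:ℝ) L,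
      S_m / 4 ≤ u t x ∧ u t x ≤ S_M + 2 * S_m / 3 :=
  statement10_general L v_m V_M S_m S_M R q₀ δ t₀ hL hvm hvmV hSm hR hq₀ hδ hδq ht₀ Q S₀ S₁ v0 u ut
    ux hQcont hQlb hQub hv0cont hv0pos hucont hutcont huxcont hut hux heq hinit hbdry hS₀ hS₁
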